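/- Set ξ_{i,j}^t := det(A_{i,j}^t) for j = 1,2, let M^t be the 2×2 matrix [[ξ_{N,1}^t, ξ_{N,2}^t],[ξ_{N+1,1}^t, ξ_{N+1,2}^t]], and set 𝓜_m := M^m M^{m−1} ⋯ M^2 M^1. Then M^{t+N} = M^t for all t ≥ 1, and for every t ≥ 1 written as t = nN + s with n ≥ 0 and 1 ≤ s ≤ N: (z_N^{t+1}, z_{N+1}^{t+1})ᵀ = 𝓜_s (𝓜_N)^n (z_N^1, z_{N+1}^1)ᵀ, and z_i^{t+1} = ξ_{i,1}^s z_N^t + ξ_{i,2}^s z_{N+1}^t for every i = 1,…,N+1. -/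

import Mathlib

/-! Read row by row, the recurrence at time `t` says that `(z_1^{t+1}, …, z_{N+1}^{t+1})` solves
the linear system `A^t x = z_N^t b₁ + z_{N+1}^t b₂^t`. Since `A^t` is unitriangular, Cramer's rule
gives `z_i^{t+1} = ξ_{i,1}^t z_N^t + ξ_{i,2}^t z_{N+1}^t`, so `M^t` maps `(z_N^t, z_{N+1}^t)` to
`(z_N^{t+1}, z_{N+1}^{t+1})`. The recurrence also shifts the indices of the `λ`'s cyclically,
`λ_i^{t+1} = λ_{i+1}^t` for `i < N` and `λ_N^{t+1} = λ_1^t`, so `λ^t`, and with it `A^t`, `b₂^t`,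
`ξ^t` and `M^t`, is `N`-periodic in `t`. -/

/-- The boundary conventions: `f_0^{t+1} = f_{N+1}^t` and `f_{N+2}^t = f_1^{t+1}`
(`ext N f i t` is `f_i^t` with these conventions; it is only used at `(0, t+1)` and
`(N+2, t)`). -/
def ext {K : Type*} (N : ℕ) (f : ℕ → ℕ → K) (i t : ℕ) : K :=
  if i = 0 then f (N + 1) (t - 1) else if i = N + 2 then f 1 (t + 1) else f i t

/-- The Laurent polynomials `λ_i^t`: `λ_i^t = (z_i^t + z_{i+2}^t)/z_{i+1}^t` for
`1 ≤ i ≤ N-1` and `λ_N^t = (z_1^t z_N^t + z_2^t z_{N+1}^t + 1)/(z_1^t z_{N+1}^t)`. -/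
def lam {K : Type*} [Field K] (N : ℕ) (z : ℕ → ℕ → K) (i t : ℕ) : K :=
  if i = N then (z 1 t * z N t + z 2 t * z (N + 1) t + 1) / (z 1 t * z (N + 1) t)
  else (z i t + z (i + 2) t) / z (i + 1) t

/-- The matrix `A^t` of the linearized system: `(A^t)_{ii} = 1`, `(A^t)_{i+1,i} = -λ_i^t`
(`1 ≤ i ≤ N`), `(A^t)_{i+2,i} = 1` (`1 ≤ i ≤ N-1`), all other entries `0`
(row/column `p ∈ {1,…,N+1}` is encoded by `p - 1 : Fin (N+1)`). -/
def Amat {K : Type*} [Field K] (N : ℕ) (z : ℕ → ℕ → K) (t : ℕ) :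
    Matrix (Fin (N + 1)) (Fin (N + 1)) K := fun i j =>
  if (i : ℕ) = (j : ℕ) then 1
  else if (i : ℕ) = (j : ℕ) + 1 then -lam N z ((j : ℕ) + 1) t
  else if (i : ℕ) = (j : ℕ) + 2 then 1
  else 0

/-- The vector `b₁ = (-1, 0, …, 0)ᵀ`. -/
def bvec1 {K : Type*} [Field K] (N : ℕ) : Fin (N + 1) → K := fun i =>
  if (i : ℕ) = 0 then -1 else 0

/-- The vector `b₂^t = (λ_N^t, -1, 0, …, 0)ᵀ`. -/
def bvec2 {K : Type*} [Field K] (N : ℕ) (z : ℕ → ℕ → K) (t : ℕ) : Fin (N + 1) → K := fun i =>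
  if (i : ℕ) = 0 then lam N z N t else if (i : ℕ) = 1 then -1 else 0

/-- `ξ_{i,j}^t := det A_{i,j}^t`, the determinant of `A^t` with its `i`-th column
(`1 ≤ i ≤ N+1`) replaced by `b₁` (if `j = 1`) or by `b₂^t` (if `j ≠ 1`). -/
def xiD {K : Type*} [Field K] (N : ℕ) (z : ℕ → ℕ → K) (i j t : ℕ) : K :=
  ((Amat N z t).updateCol ⟨(i - 1) % (N + 1), Nat.mod_lt _ (Nat.succ_pos N)⟩
    (if j = 1 then bvec1 N else bvec2 N z t)).det

/-- The `2 × 2` matrix `M^t = [[ξ_{N,1}^t, ξ_{N,2}^t], [ξ_{N+1,1}^t, ξ_{N+1,2}^t]]`. -/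
def Mmat {K : Type*} [Field K] (N : ℕ) (z : ℕ → ℕ → K) (t : ℕ) : Matrix (Fin 2) (Fin 2) K :=
  !![xiD N z N 1 t, xiD N z N 2 t; xiD N z (N + 1) 1 t, xiD N z (N + 1) 2 t]

/-- `𝓜_m := M^m M^{m-1} ⋯ M^2 M^1` (with `𝓜_0 = 1`). -/
def Mprod {K : Type*} [Field K] (N : ℕ) (z : ℕ → ℕ → K) : ℕ → Matrix (Fin 2) (Fin 2) K
  | 0 => 1
  | m + 1 => Mmat N z (m + 1) * Mprod N z m


theorem Fintype.sum_eq_add_add {α M : Type*} [Fintype α] [DecidableEq α] [AddCommMonoid M]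
    {f : α → M} (a b c : α) (hab : a ≠ b) (hac : a ≠ c) (hbc : b ≠ c)
    (h : ∀ x, x ≠ a → x ≠ b → x ≠ c → f x = 0) :
    ∑ x, f x = f a + f b + f c := by
  rw [← Finset.sum_subset (Finset.subset_univ {a, b, c}) fun x _ hx => by
      simp only [Finset.mem_insert, Finset.mem_singleton, not_or] at hx
      exact h x hx.1 hx.2.1 hx.2.2,
    Finset.sum_insert (by simp [hab, hac]), Finset.sum_pair hbc, add_assoc]

open Matrix in
theorem Matrix.det_updateCol_mulVec {n R : Type*} [Fintype n] [DecidableEq n] [CommRing R]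
    (A : Matrix n n R) (x : n → R) (i : n) :
    (A.updateCol i (A *ᵥ x)).det = A.det * x i := by
  rw [← cramer_apply, cramer_eq_adjugate_mulVec, mulVec_mulVec, adjugate_mul, smul_mulVec,
    one_mulVec, Pi.smul_apply, smul_eq_mul]

section Recurrence

variable {K : Type*} [Field K] {N : ℕ} {z : ℕ → ℕ → K} (hN : 2 ≤ N)
  (hrec : ∀ t, 1 ≤ t → ∀ i, 1 ≤ i → i ≤ N + 1 →
    z i (t + 1) * z i t = ext N z (i - 1) (t + 1) * ext N z (i + 1) t + 1)
  {t : ℕ} (ht : 1 ≤ t)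
include hrec ht

include hN in
theorem recurrence_first : z 1 (t + 1) * z 1 t = z (N + 1) t * z 2 t + 1 := by
  simpa [ext, show N ≠ 0 by omega] using hrec t ht 1 le_rfl (by omega)

theorem recurrence_succ {i : ℕ} (hi : 1 ≤ i) (hiN : i + 1 ≤ N) :
    z (i + 1) (t + 1) * z (i + 1) t = z i (t + 1) * z (i + 2) t + 1 := by
  simpa [ext, show i ≠ 0 by omega, show i ≠ N by omega, show i ≠ N + 2 by omega]
    using hrec t ht (i + 1) (by omega) (by omega)

include hN in
theorem recurrence_last :
    z (N + 1) (t + 1) * z (N + 1) t = z N (t + 1) * z 1 (t + 1) + 1 := by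
  simpa [ext, show N ≠ 0 by omega] using hrec t ht (N + 1) (by omega) le_rfl

end Recurrence

section Lambda

variable {K : Type*} [Field K] {N : ℕ} {z : ℕ → ℕ → K} (hN : 2 ≤ N)
  (hz : ∀ i t, 1 ≤ i → i ≤ N + 1 → 1 ≤ t → z i t ≠ 0)
  (hrec : ∀ t, 1 ≤ t → ∀ i, 1 ≤ i → i ≤ N + 1 →
    z i (t + 1) * z i t = ext N z (i - 1) (t + 1) * ext N z (i + 1) t + 1)
include hN hz hrec

theorem z_one_succ_eq {t : ℕ} (ht : 1 ≤ t) :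
    z 1 (t + 1) = -z N t + lam N z N t * z (N + 1) t := by
  have := hz 1 t le_rfl (by omega) ht
  have := hz (N + 1) t (by omega) le_rfl ht
  rw [lam, if_pos rfl]
  field_simp
  linear_combination recurrence_first hN hrec ht

theorem z_two_succ_eq {t : ℕ} (ht : 1 ≤ t) :
    z 2 (t + 1) = lam N z 1 t * z 1 (t + 1) - z (N + 1) t := by
  have := hz 2 t (by omega) (by omega) ht
  rw [lam, if_neg (by omega)]
  field_simp
  linear_combination recurrence_succ hrec ht le_rfl (by omega) - recurrence_first hN hrec ht

theorem lam_mul_z_succ {t : ℕ} (ht : 1 ≤ t) {i : ℕ} (hi : 1 ≤ i) (hiN : i + 1 ≤ N) :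
    lam N z (i + 1) t * z (i + 1) (t + 1) = z i (t + 1) + z (i + 2) (t + 1) := by
  have hmid := recurrence_succ hrec ht hi hiN
  rcases hiN.eq_or_lt with hiN | hiN
  · subst hiN
    have := hz 1 t le_rfl (by omega) ht
    have := hz (i + 2) t (by omega) le_rfl ht
    rw [lam, if_pos rfl]
    field_simp
    linear_combination z 1 t * hmid - z 1 t * recurrence_last hN hrec ht -
      z (i + 1) (t + 1) * recurrence_first hN hrec ht
  · have hnext := recurrence_succ hrec ht (i := i + 1) (by omega) hiN
    have := hz (i + 2) t (by omega) (by omega) ht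
    rw [lam, if_neg (by omega)]
    field_simp
    linear_combination hmid - hnext

theorem lam_succ_of_lt {t : ℕ} (ht : 1 ≤ t) {i : ℕ} (hi : 1 ≤ i) (hiN : i < N) :
    lam N z i (t + 1) = lam N z (i + 1) t := by
  have := hz (i + 1) (t + 1) (by omega) (by omega) (by omega)
  rw [lam, if_neg hiN.ne, ← lam_mul_z_succ hN hz hrec ht hi hiN]
  field_simp

theorem lam_self_succ {t : ℕ} (ht : 1 ≤ t) : lam N z N (t + 1) = lam N z 1 t := by
  have := hz 1 (t + 1) le_rfl (by omega) (by omega)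
  have := hz (N + 1) (t + 1) (by omega) le_rfl (by omega)
  have := hz 2 t (by omega) (by omega) ht
  rw [lam, if_pos rfl, lam, if_neg (by omega), div_eq_div_iff (by positivity) (by assumption)]
  linear_combination -z 2 t * recurrence_last hN hrec ht -
    z (N + 1) (t + 1) * recurrence_first hN hrec ht +
    z (N + 1) (t + 1) * recurrence_succ hrec ht le_rfl (by omega)

theorem lam_add_of_le {t : ℕ} (ht : 1 ≤ t) {i k : ℕ} (hi : 1 ≤ i) (hik : i + k ≤ N) :
    lam N z i (t + k) = lam N z (i + k) t := by
  induction k generalizing i with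
  | zero => rfl
  | succ k ih =>
    rw [← add_assoc, lam_succ_of_lt hN hz hrec (by omega) hi (by omega),
      ih (by omega) (by omega), add_right_comm, add_assoc]

theorem lam_add_self {t : ℕ} (ht : 1 ≤ t) {i : ℕ} (hi : 1 ≤ i) (hiN : i ≤ N) :
    lam N z i (t + N) = lam N z i t :=
  calc lam N z i (t + N) = lam N z i (t + (i - 1) + 1 + (N - i)) := by congr 1; omega
    _ = lam N z N (t + (i - 1) + 1) := by
      rw [lam_add_of_le hN hz hrec (by omega) hi (by omega), Nat.add_sub_cancel' hiN]
    _ = lam N z 1 (t + (i - 1)) := lam_self_succ hN hz hrec (by omega)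
    _ = lam N z i t := by
      rw [lam_add_of_le hN hz hrec ht le_rfl (by omega), Nat.add_sub_cancel' hi]

end Lambda

section Periodicity

variable {K : Type*} [Field K] {N : ℕ} {z : ℕ → ℕ → K} (hN : 2 ≤ N)
  (hz : ∀ i t, 1 ≤ i → i ≤ N + 1 → 1 ≤ t → z i t ≠ 0)
  (hrec : ∀ t, 1 ≤ t → ∀ i, 1 ≤ i → i ≤ N + 1 →
    z i (t + 1) * z i t = ext N z (i - 1) (t + 1) * ext N z (i + 1) t + 1)
  {t : ℕ} (ht : 1 ≤ t)
include hN hz hrec ht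

theorem Amat_add_self : Amat N z (t + N) = Amat N z t := by
  ext p q
  simp only [Amat]
  split_ifs with _ hpq
  · rfl
  · rw [lam_add_self hN hz hrec ht (Nat.le_add_left 1 q) (by omega)]
  all_goals rfl

theorem bvec2_add_self : bvec2 N z (t + N) = bvec2 N z t := by
  unfold bvec2
  rw [lam_add_self hN hz hrec ht (by omega) le_rfl]

theorem xiD_add_self (i j : ℕ) : xiD N z i j (t + N) = xiD N z i j t := by
  rw [xiD, xiD, Amat_add_self hN hz hrec ht, bvec2_add_self hN hz hrec ht]

theorem Mmat_add_self : Mmat N z (t + N) = Mmat N z t := by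
  simp only [Mmat, xiD_add_self hN hz hrec ht]

theorem xiD_add_mul_self (i j n : ℕ) : xiD N z i j (t + n * N) = xiD N z i j t := by
  induction n with
  | zero => simp
  | succ n ih => rw [add_mul, one_mul, ← add_assoc, xiD_add_self hN hz hrec (by omega), ih]

end Periodicity

section LinearSystem

open Matrix

variable {K : Type*} [Field K] {N : ℕ} {z : ℕ → ℕ → K} {t : ℕ}

theorem det_Amat : (Amat N z t).det = 1 := by
  rw [det_of_isLowerTriangular _ fun p q (hpq : p < q) => by
    simp only [Amat]; rw [if_neg (by omega), if_neg (by omega), if_neg (by omega)]]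
  simp [Amat]

theorem Amat_apply_eq_zero {p : ℕ} (hp : p < N + 1) {q : Fin (N + 1)} (h₀ : p ≠ q)
    (h₁ : p ≠ q + 1) (h₂ : p ≠ q + 2) : Amat N z t ⟨p, hp⟩ q = 0 := by
  simp [Amat, h₀, h₁, h₂]

variable (f : ℕ → K)

theorem Amat_mulVec_apply_zero (hp : 0 < N + 1) :
    (Amat N z t *ᵥ fun j => f (j + 1)) ⟨0, hp⟩ = f 1 := by
  rw [mulVec, dotProduct, Fintype.sum_eq_single ⟨0, hp⟩ fun q hq => ?_]
  · simp [Amat]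
  · have : (q : ℕ) ≠ 0 := Fin.val_ne_iff.mpr hq
    rw [Amat_apply_eq_zero hp (by omega) (by omega) (by omega), zero_mul]

theorem Amat_mulVec_apply_one (hp : 1 < N + 1) :
    (Amat N z t *ᵥ fun j => f (j + 1)) ⟨1, hp⟩ = f 2 - lam N z 1 t * f 1 := by
  rw [mulVec, dotProduct, Fintype.sum_eq_add ⟨0, by omega⟩ ⟨1, hp⟩
    (Fin.ne_of_val_ne zero_ne_one) fun q hq => ?_]
  · simp only [Amat, one_ne_zero, ↓reduceIte, zero_add, neg_mul, Nat.reduceAdd, one_mul]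
    ring
  · have h₀ : (q : ℕ) ≠ 0 := Fin.val_ne_iff.mpr hq.1
    have h₁ : (q : ℕ) ≠ 1 := Fin.val_ne_iff.mpr hq.2
    rw [Amat_apply_eq_zero hp (by omega) (by omega) (by omega), zero_mul]

theorem Amat_mulVec_apply_add_two {p : ℕ} (hp : p + 2 < N + 1) :
    (Amat N z t *ᵥ fun j => f (j + 1)) ⟨p + 2, hp⟩ =
      f (p + 1) - lam N z (p + 2) t * f (p + 2) + f (p + 3) := by
  have hp₀ : p < N + 1 := by omega
  have hp₁ : p + 1 < N + 1 := by omega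
  rw [mulVec, dotProduct, Fintype.sum_eq_add_add ⟨p, hp₀⟩ ⟨p + 1, hp₁⟩ ⟨p + 2, hp⟩
    (by simp) (by simp) (by simp) fun q h₀ h₁ h₂ => ?_]
  · simp only [Amat, Nat.add_eq_left, OfNat.ofNat_ne_zero, ↓reduceIte, Nat.add_left_cancel_iff,
      OfNat.ofNat_ne_one, one_mul, neg_mul]
    ring
  · have h₀ : (q : ℕ) ≠ p := Fin.val_ne_iff.mpr h₀
    have h₁ : (q : ℕ) ≠ p + 1 := Fin.val_ne_iff.mpr h₁
    have h₂ : (q : ℕ) ≠ p + 2 := Fin.val_ne_iff.mpr h₂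
    rw [Amat_apply_eq_zero hp (by omega) (by omega) (by omega), zero_mul]

end LinearSystem

section Solution

open Matrix

variable {K : Type*} [Field K] {N : ℕ} {z : ℕ → ℕ → K} (hN : 2 ≤ N)
  (hz : ∀ i t, 1 ≤ i → i ≤ N + 1 → 1 ≤ t → z i t ≠ 0)
  (hrec : ∀ t, 1 ≤ t → ∀ i, 1 ≤ i → i ≤ N + 1 →
    z i (t + 1) * z i t = ext N z (i - 1) (t + 1) * ext N z (i + 1) t + 1)
include hN hz hrec

theorem Amat_mulVec_z_succ {t : ℕ} (ht : 1 ≤ t) :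
    (Amat N z t *ᵥ fun j => z (j + 1) (t + 1)) = z N t • bvec1 N + z (N + 1) t • bvec2 N z t := by
  ext ⟨p, hp⟩
  rcases p with _ | _ | p
  · rw [Amat_mulVec_apply_zero (fun i => z i (t + 1)), z_one_succ_eq hN hz hrec ht]
    simp only [Pi.add_apply, Pi.smul_apply, bvec1, bvec2, ↓reduceIte, smul_eq_mul]
    ring
  · rw [Amat_mulVec_apply_one (fun i => z i (t + 1)), z_two_succ_eq hN hz hrec ht]
    simp [bvec1, bvec2]
  · have hrow := lam_mul_z_succ hN hz hrec ht (i := p + 1) (by omega) (by omega)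
    simp only [add_assoc, Nat.reduceAdd] at hrow
    rw [Amat_mulVec_apply_add_two (fun i => z i (t + 1)), ← add_sub_right_comm, ← hrow]
    simp [bvec1, bvec2]

theorem z_succ_eq_xiD {t : ℕ} (ht : 1 ≤ t) {i : ℕ} (hi : 1 ≤ i) (hiN : i ≤ N + 1) :
    z i (t + 1) = xiD N z i 1 t * z N t + xiD N z i 2 t * z (N + 1) t := by
  have hcol : (i - 1) % (N + 1) + 1 = i := by rw [Nat.mod_eq_of_lt (by omega)]; omega
  have := det_updateCol_mulVec (Amat N z t) (fun j => z (j + 1) (t + 1))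
    ⟨(i - 1) % (N + 1), Nat.mod_lt _ (Nat.succ_pos N)⟩
  rw [Amat_mulVec_z_succ hN hz hrec ht, det_updateCol_add, det_updateCol_smul,
    det_updateCol_smul, det_Amat, one_mul, hcol] at this
  rw [← this, xiD, xiD, if_pos rfl, if_neg (by omega)]
  ring

theorem Mmat_mulVec {t : ℕ} (ht : 1 ≤ t) :
    Mmat N z t *ᵥ ![z N t, z (N + 1) t] = ![z N (t + 1), z (N + 1) (t + 1)] := by
  have h₁ := z_succ_eq_xiD hN hz hrec ht (i := N) (by omega) (by omega)
  have h₂ := z_succ_eq_xiD hN hz hrec ht (i := N + 1) (by omega) le_rfl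
  ext p
  fin_cases p <;> simp [Mmat, mulVec, h₁, h₂]

theorem Mprod_mulVec (m : ℕ) :
    Mprod N z m *ᵥ ![z N 1, z (N + 1) 1] = ![z N (m + 1), z (N + 1) (m + 1)] := by
  induction m with
  | zero => simp [Mprod]
  | succ m ih => rw [Mprod, ← mulVec_mulVec, ih, Mmat_mulVec hN hz hrec (by omega)]

theorem Mprod_add_self (m : ℕ) : Mprod N z (m + N) = Mprod N z m * Mprod N z N := by
  induction m with
  | zero => simp [Mprod]
  | succ m ih =>
    rw [add_right_comm, Mprod, ih, add_right_comm m N 1, Mmat_add_self hN hz hrec le_add_self,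
      Mprod, mul_assoc]

theorem Mprod_mul_add (n s : ℕ) : Mprod N z (n * N + s) = Mprod N z s * Mprod N z N ^ n := by
  induction n with
  | zero => simp
  | succ n ih => rw [add_mul, one_mul, add_right_comm, Mprod_add_self hN hz hrec, ih, pow_succ,
      mul_assoc]

end Solution

theorem stmt16 {K : Type*} [Field K] (N : ℕ) (hN : 2 ≤ N) (z : ℕ → ℕ → K)
    (hz : ∀ i t, 1 ≤ i → i ≤ N + 1 → 1 ≤ t → z i t ≠ 0)
    (hrec : ∀ t, 1 ≤ t → ∀ i, 1 ≤ i → i ≤ N + 1 →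
      z i (t + 1) * z i t = ext N z (i - 1) (t + 1) * ext N z (i + 1) t + 1) :
    (∀ t, 1 ≤ t → Mmat N z (t + N) = Mmat N z t) ∧
    (∀ n s : ℕ, 1 ≤ s → s ≤ N →
      (Mprod N z s * Mprod N z N ^ n).mulVec ![z N 1, z (N + 1) 1] =
        ![z N (n * N + s + 1), z (N + 1) (n * N + s + 1)] ∧
      ∀ i, 1 ≤ i → i ≤ N + 1 →
        z i (n * N + s + 1) =
          xiD N z i 1 s * z N (n * N + s) + xiD N z i 2 s * z (N + 1) (n * N + s)) := by
  refine ⟨fun t ht => Mmat_add_self hN hz hrec ht, fun n s hs _ => ⟨?_, fun i hi hiN => ?_⟩⟩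
  · rw [← Mprod_mul_add hN hz hrec]
    exact Mprod_mulVec hN hz hrec (n * N + s)
  · rw [z_succ_eq_xiD hN hz hrec (by omega) hi hiN, add_comm (n * N) s,
      xiD_add_mul_self hN hz hrec hs, xiD_add_mul_self hN hz hrec hs]
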